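/- arXiv:1311.0459 — 3 statements merged into one kernel-verified Lean document; each statement's English description precedes it below -/
import Mathlib

section
/- (Theorem 1) Consider λ independent transmission attempts of the same packet to a user, modeled on the product probability space (Fin λ → Bool × Bool) where each coordinate carries the product of two independent Bernoulli measures: the packet is received with probability 1−p and the feedback channel succeeds with probability 1−q, with p, q ∈ [0,1], and the base station hears feedback on an attempt iff both are true. If p + (1−p)q > 0, then the conditional probability that the packet was received in none of the λ attempts, given that the base station heard no feedback on any of the λ attempts, equals (p / (p + (1−p)q))^λ. In particular, the probability that the packet is still innovative (i.e., still not received) to the user after λ unacknowledged attempts is (p / (p + (1−p)q))^λ. -/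
open MeasureTheory ProbabilityTheory
open scoped ENNReal NNReal

/-- The Bernoulli PMF with an `ℝ≥0∞` parameter, as `PMF.bernoulli` was defined in the older Mathlib. -/
noncomputable def bernoulliPMF (p : ℝ≥0∞) (h : p ≤ 1) : PMF Bool :=
  PMF.ofFintype (fun b => bif b then p else 1 - p) (by simp [h])

/-! The attempts are i.i.d. and both events are products over the attempts, so the conditional
probability is the `lam`-th power of the one-attempt conditional probability
`P(not received) / P(no feedback) = p / (p + (1 - p) * q)`. -/

open Set

section CondPi

variable {ι α : Type*} [Fintype ι] [MeasurableSpace α] {ν : Measure α} [SigmaFinite ν]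
  {A : Set α}

theorem cond_univ_pi_const (hA : MeasurableSet A) (B : Set α) :
    (Measure.pi fun _ : ι => ν)[|univ.pi fun _ => A] (univ.pi fun _ => B)
      = ν[|A] B ^ Fintype.card ι := by
  rw [cond_apply (.univ_pi fun _ => hA), cond_apply hA, ← pi_inter_distrib, Measure.pi_pi,
    Measure.pi_pi, Finset.prod_const, Finset.prod_const, Finset.card_univ, ENNReal.inv_pow,
    mul_pow]

end CondPi

section Bernoulli

variable {a b : ℝ≥0∞} {ha : a ≤ 1} {hb : b ≤ 1}

@[simp]
theorem bernoulliPMF_toMeasure_singleton (x : Bool) :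
    (bernoulliPMF a ha).toMeasure {x} = bif x then a else 1 - a := by
  rw [PMF.toMeasure_apply_singleton _ _ (measurableSet_singleton _), bernoulliPMF,
    PMF.ofFintype_apply]

theorem bernoulliPMF_prod_fst_eq_false :
    ((bernoulliPMF a ha).toMeasure.prod (bernoulliPMF b hb).toMeasure) {x | x.1 = false}
      = 1 - a := by
  rw [show {x : Bool × Bool | x.1 = false} = {false} ×ˢ univ by ext; simp, Measure.prod_prod,
    measure_univ, mul_one, bernoulliPMF_toMeasure_singleton, cond_false]

theorem bernoulliPMF_prod_not_both_true :
    ((bernoulliPMF a ha).toMeasure.prod (bernoulliPMF b hb).toMeasure)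
        {x | ¬(x.1 = true ∧ x.2 = true)}
      = (1 - a) + a * (1 - b) := by
  have hsplit : {x : Bool × Bool | ¬(x.1 = true ∧ x.2 = true)}
      = {x | x.1 = false} ∪ {true} ×ˢ {false} := by
    ext ⟨x, y⟩; cases x <;> cases y <;> simp
  rw [hsplit, measure_union, bernoulliPMF_prod_fst_eq_false, Measure.prod_prod]
  · simp only [bernoulliPMF_toMeasure_singleton, cond_true, cond_false]
  · exact Set.disjoint_left.2 (by simp)
  · exact .of_discrete

theorem bernoulliPMF_prod_cond_fst_eq_false :
    ((bernoulliPMF a ha).toMeasure.prod (bernoulliPMF b hb).toMeasure)[|{x |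
        ¬(x.1 = true ∧ x.2 = true)}] {x | x.1 = false}
      = (1 - a) / ((1 - a) + a * (1 - b)) := by
  rw [cond_apply .of_discrete, inter_eq_self_of_subset_right (fun x hx => by simp_all),
    bernoulliPMF_prod_fst_eq_false, bernoulliPMF_prod_not_both_true, ENNReal.div_eq_inv_mul]

end Bernoulli

theorem cond_never_received_given_no_feedback_pow_general
    (p q : ℝ≥0∞) (hp : p ≤ 1) (hq : q ≤ 1) (lam : ℕ) :
    ((Measure.pi (fun _ : Fin lam =>
        (bernoulliPMF (1 - p) tsub_le_self).toMeasure.prod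
          (bernoulliPMF (1 - q) tsub_le_self).toMeasure))[|{ω : Fin lam → Bool × Bool | ∀ i, ¬((ω i).1 = true ∧ (ω i).2 = true)}])
      {ω : Fin lam → Bool × Bool | ∀ i, (ω i).1 = false}
      = (p / (p + (1 - p) * q)) ^ lam := by
  have hpi (P : Bool × Bool → Prop) :
      {ω : Fin lam → Bool × Bool | ∀ i, P (ω i)} = univ.pi fun _ => {x | P x} := by
    ext; simp
  rw [hpi (·.1 = false), hpi fun x => ¬(x.1 = true ∧ x.2 = true),
    cond_univ_pi_const .of_discrete, bernoulliPMF_prod_cond_fst_eq_false, Fintype.card_fin, ENNReal.sub_sub_cancel ENNReal.one_ne_top hp,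
    ENNReal.sub_sub_cancel ENNReal.one_ne_top hq]

/-- Theorem 1: after `lam` independent unacknowledged transmission attempts, the
conditional probability that the packet was never received, given that no feedback
was heard on any attempt, equals `(p / (p + (1 - p) * q)) ^ lam`. Each attempt lives
on `Bool × Bool`: the packet is received with probability `1 - p`, the feedback
channel succeeds with probability `1 - q`, and feedback is heard iff both hold. -/
theorem cond_never_received_given_no_feedback_pow
    (p q : ℝ≥0∞) (hp : p ≤ 1) (hq : q ≤ 1) (lam : ℕ)
    (hpos : 0 < p + (1 - p) * q) :
    ((Measure.pi (fun _ : Fin lam =>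
        (bernoulliPMF (1 - p) tsub_le_self).toMeasure.prod
          (bernoulliPMF (1 - q) tsub_le_self).toMeasure))[|{ω : Fin lam → Bool × Bool | ∀ i, ¬((ω i).1 = true ∧ (ω i).2 = true)}])
      {ω : Fin lam → Bool × Bool | ∀ i, (ω i).1 = false}
      = (p / (p + (1 - p) * q)) ^ lam :=
  cond_never_received_given_no_feedback_pow_general p q hp hq lam
end

section
/- Let p_i, p_k, f_i, f_k ∈ [0,1] and let a_{ij}, a_{il}, a_{kj}, a_{kl} ∈ [0,1] denote the probabilities that packets j and l are innovative to users i and k respectively. Define for any pair (x, y) of innovation probabilities of a user u ∈ {i,k} the expected delay contributions D_u(j⊕l) = (1−p_u)·(a_{uj}·a_{ul} + (1−a_{uj})·(1−a_{ul}))·f_u, D_u(j) = (1−p_u)·(1−a_{uj})·f_u, D_u(l) = (1−p_u)·(1−a_{ul})·f_u, and the two-user sums D(j⊕l) = D_i(j⊕l) + D_k(j⊕l), D(j) = D_i(j) + D_k(j), D(l) = D_i(l) + D_k(l). If a_{il} = 0 and a_{kj} = 0 (i.e., packet l is in the Has set of user i and packet j is in the Has set of user k), then D(j⊕l) ≤ min(D(j),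 D(l)). Consequently, every edge of the G-IDNC graph satisfies the LG-IDNC connectivity condition C2, so the G-IDNC graph is a subgraph of the LG-IDNC graph. -/
/-!
If user `i` already has `l`, then `j ⊕ l` is instantly decodable for `i` exactly when `j` is,
so `i` contributes the same delay to `D(j ⊕ l)` as to `D(j)`, and no more than to `D(l)`, where `l`
is useless to it. Symmetrically, user `k` contributes the same to `D(j ⊕ l)` as to `D(l)` and no
more than to `D(j)`. Summing over the two users gives both inequalities.
-/

lemma xor_nondecodable_of_right_known (x : ℝ) : x * 0 + (1 - x) * (1 - 0) = 1 - x := by ring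

lemma xor_nondecodable_of_left_known (y : ℝ) : 0 * y + (1 - 0) * (1 - y) = 1 - y := by ring

lemma expected_delay_le_of_known {p f a : ℝ} (hp : p ≤ 1) (hf : 0 ≤ f) (ha : 0 ≤ a) :
    (1 - p) * (1 - a) * f ≤ (1 - p) * (1 - 0) * f := by
  have : 0 ≤ 1 - p := sub_nonneg.mpr hp
  gcongr

theorem gidnc_edge_satisfies_lgidnc_C2_general
    (pi pk fi fk aij ail akj akl : ℝ)
    (hpi : pi ∈ Set.Icc (0:ℝ) 1) (hpk : pk ∈ Set.Icc (0:ℝ) 1)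
    (hfi : fi ∈ Set.Icc (0:ℝ) 1) (hfk : fk ∈ Set.Icc (0:ℝ) 1)
    (haij : aij ∈ Set.Icc (0:ℝ) 1)
    (hakl : akl ∈ Set.Icc (0:ℝ) 1)
    (hil : ail = 0) (hkj : akj = 0) :
    (1 - pi) * (aij * ail + (1 - aij) * (1 - ail)) * fi
        + (1 - pk) * (akj * akl + (1 - akj) * (1 - akl)) * fk
      ≤ min ((1 - pi) * (1 - aij) * fi + (1 - pk) * (1 - akj) * fk)
            ((1 - pi) * (1 - ail) * fi + (1 - pk) * (1 - akl) * fk) := by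
  subst hil hkj
  rw [xor_nondecodable_of_right_known, xor_nondecodable_of_left_known]
  refine le_min ?_ ?_
  · exact add_le_add_right (expected_delay_le_of_known hpk.2 hfk.1 hakl.1) _
  · exact add_le_add_left (expected_delay_le_of_known hpi.2 hfi.1 haij.1) _

/-- Every G-IDNC edge satisfies the LG-IDNC condition C2: if packet `l` is in the Has
set of user `i` (`ail = 0`) and packet `j` is in the Has set of user `k` (`akj = 0`),
then the expected two-user decoding delay of the coded packet `j ⊕ l` is at most the
minimum of the expected delays of the individual packets `j` and `l`. Hence the
G-IDNC graph is a subgraph of the LG-IDNC graph. -/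
theorem gidnc_edge_satisfies_lgidnc_C2
    (pi pk fi fk aij ail akj akl : ℝ)
    (hpi : pi ∈ Set.Icc (0:ℝ) 1) (hpk : pk ∈ Set.Icc (0:ℝ) 1)
    (hfi : fi ∈ Set.Icc (0:ℝ) 1) (hfk : fk ∈ Set.Icc (0:ℝ) 1)
    (haij : aij ∈ Set.Icc (0:ℝ) 1) (hail : ail ∈ Set.Icc (0:ℝ) 1)
    (hakj : akj ∈ Set.Icc (0:ℝ) 1) (hakl : akl ∈ Set.Icc (0:ℝ) 1)
    (hil : ail = 0) (hkj : akj = 0) :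
    (1 - pi) * (aij * ail + (1 - aij) * (1 - ail)) * fi
        + (1 - pk) * (akj * akl + (1 - akj) * (1 - akl)) * fk
      ≤ min ((1 - pi) * (1 - aij) * fi + (1 - pk) * (1 - akj) * fk)
            ((1 - pi) * (1 - ail) * fi + (1 - pk) * (1 - akl) * fk) :=
  gidnc_edge_satisfies_lgidnc_C2_general pi pk fi fk aij ail akj akl hpi hpk hfi hfk haij hakl hil
    hkj
end

section
/- Let p_i, p_k ∈ [0,1) and f_i, f_k ∈ (0,1], and let a_{ij}, a_{il}, a_{kj}, a_{kl} ∈ {0,1} be binary innovation indicators with a_{ij} = 1 and a_{kl} = 1 (user i wants packet j and user k wants packet l). Define D_u(j⊕l) = (1−p_u)·(a_{uj}·a_{ul} + (1−a_{uj})·(1−a_{ul}))·f_u, D_u(m) = (1−p_u)·(1−a_{um})·f_u for m ∈ {j,l} and u ∈ {i,k}, and D(κ) = D_i(κ) + D_k(κ). Then D(j⊕l) ≤ min(D(j), D(l)) holds if and only if a_{il} = 0 and a_{kj} = 0. In other words, in the perfect feedback case, where all innovation probabilities are 0 or 1, the LG-IDNC connectivity condition C2 coincides with the G-IDNC connectivity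 condition, so the two graphs are identical. -/
/-!
With `a_ij = a_kl = 1` and weights `w_u = (1 - p_u) f_u > 0`, the three delays become
`D(j⊕l) = w_i a_il + w_k a_kj`, `D(j) = w_k (1 - a_kj)` and `D(l) = w_i (1 - a_il)`.
A binary indicator equal to `1` makes `D(j⊕l)` positive while the matching single-packet
delay vanishes, so C2 forces both indicators to be `0`; conversely both sides are then
`0 ≤ w`.
-/

lemma eq_zero_of_mul_add_le_mul_one_sub {w x c : ℝ} (hw : 0 < w) (hx : x ∈ ({0, 1} : Set ℝ))
    (hc : 0 ≤ c) (h : w * x + c ≤ w * (1 - x)) : x = 0 := by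
  rcases hx with rfl | rfl
  · rfl
  · linarith

lemma binary_mul_add_mul_le_min_iff {wi wk x y : ℝ} (hwi : 0 < wi) (hwk : 0 < wk)
    (hx : x ∈ ({0, 1} : Set ℝ)) (hy : y ∈ ({0, 1} : Set ℝ)) :
    wi * x + wk * y ≤ min (wk * (1 - y)) (wi * (1 - x)) ↔ x = 0 ∧ y = 0 := by
  have hx0 : 0 ≤ x := by rcases hx with rfl | rfl <;> norm_num
  have hy0 : 0 ≤ y := by rcases hy with rfl | rfl <;> norm_num
  constructor
  · intro h
    obtain ⟨hj, hl⟩ := le_min_iff.mp h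
    refine ⟨eq_zero_of_mul_add_le_mul_one_sub hwi hx (by positivity) hl, ?_⟩
    exact eq_zero_of_mul_add_le_mul_one_sub (c := wi * x) hwk hy (by positivity) (by linarith)
  · rintro ⟨rfl, rfl⟩
    simp [hwi.le, hwk.le]

theorem lgidnc_eq_gidnc_perfect_feedback_general
    (pi pk fi fk aij ail akj akl : ℝ)
    (hpi : pi ∈ Set.Ico (0:ℝ) 1) (hpk : pk ∈ Set.Ico (0:ℝ) 1)
    (hfi : fi ∈ Set.Ioc (0:ℝ) 1) (hfk : fk ∈ Set.Ioc (0:ℝ) 1)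
    (hail : ail ∈ ({0, 1} : Set ℝ))
    (hakj : akj ∈ ({0, 1} : Set ℝ))
    (hij : aij = 1) (hkl : akl = 1) :
    ((1 - pi) * (aij * ail + (1 - aij) * (1 - ail)) * fi
        + (1 - pk) * (akj * akl + (1 - akj) * (1 - akl)) * fk
      ≤ min ((1 - pi) * (1 - aij) * fi + (1 - pk) * (1 - akj) * fk)
            ((1 - pi) * (1 - ail) * fi + (1 - pk) * (1 - akl) * fk))
      ↔ (ail = 0 ∧ akj = 0) := by
  subst hij hkl
  have hwi : 0 < (1 - pi) * fi := mul_pos (sub_pos.mpr hpi.2) hfi.1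
  have hwk : 0 < (1 - pk) * fk := mul_pos (sub_pos.mpr hpk.2) hfk.1
  convert binary_mul_add_mul_le_min_iff hwi hwk hail hakj using 3 <;> ring

/-- Perfect feedback case: with binary innovation indicators (`aij = 1`, `akl = 1`,
and `ail, akj ∈ {0,1}`), packet erasure probabilities `pi, pk ∈ [0,1)` and finish
complements `fi, fk ∈ (0,1]`, the LG-IDNC connectivity condition C2,
`D(j⊕l) ≤ min (D(j)) (D(l))`, holds if and only if `ail = 0` and `akj = 0`, i.e. it
coincides with the G-IDNC connectivity condition, so the two graphs are identical. -/
theorem lgidnc_eq_gidnc_perfect_feedback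
    (pi pk fi fk aij ail akj akl : ℝ)
    (hpi : pi ∈ Set.Ico (0:ℝ) 1) (hpk : pk ∈ Set.Ico (0:ℝ) 1)
    (hfi : fi ∈ Set.Ioc (0:ℝ) 1) (hfk : fk ∈ Set.Ioc (0:ℝ) 1)
    (haij : aij ∈ ({0, 1} : Set ℝ)) (hail : ail ∈ ({0, 1} : Set ℝ))
    (hakj : akj ∈ ({0, 1} : Set ℝ)) (hakl : akl ∈ ({0, 1} : Set ℝ))
    (hij : aij = 1) (hkl : akl = 1) :
    ((1 - pi) * (aij * ail + (1 - aij) * (1 - ail)) * fi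
        + (1 - pk) * (akj * akl + (1 - akj) * (1 - akl)) * fk
      ≤ min ((1 - pi) * (1 - aij) * fi + (1 - pk) * (1 - akj) * fk)
            ((1 - pi) * (1 - ail) * fi + (1 - pk) * (1 - akl) * fk))
      ↔ (ail = 0 ∧ akj = 0) :=
  lgidnc_eq_gidnc_perfect_feedback_general pi pk fi fk aij ail akj akl hpi hpk hfi hfk hail hakj hij
    hkl
end
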